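/- For every natural number n ≥ 1, (n + 1/2)^(n-1) = Σ_{j=1}^{n} C(n-1, n-j) · (n - j + 1/2)^(n-j) · j^(j-2), as an identity of rational numbers, where j^(j-2) for j = 1 is interpreted as 1. -/

import Mathlib

/-!
Abel's identity with `x = 1`, `z = -1` says that
`P_m(Y) = ∑_{k ≤ m} C(m, k) (k + 1)^(k - 1) (Y - k)^(m - k)` equals `(Y + 1)^m`; the theorem is its
value at `Y = n - 1/2`, `m = n - 1`, reindexed by `j = k + 1`. The identity follows by induction on
`m`: termwise `P_{m+1}' = (m + 1) P_m`, so `P_{m+1} - (Y + 1)^(m+1)` is constant, and the constant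
is `P_{m+1}(-1) = ∑ (-1)^(m+1-k) C(m+1, k) (k + 1)^m`, the `(m+1)`-st forward difference at `0` of
the degree-`m` polynomial `(Y + 1)^m`, which vanishes.
-/

open Finset Polynomial fwdDiff

section

variable {R : Type*} [CommRing R]

variable (R) in
noncomputable def abelPoly (m : ℕ) : R[X] :=
  ∑ k ∈ range (m + 1), C (m.choose k * ((k : R) + 1) ^ (k - 1)) * (X - C (k : R)) ^ (m - k)

theorem derivative_abelPoly_succ (m : ℕ) :
    derivative (abelPoly R (m + 1)) = C ((m : R) + 1) * abelPoly R m := by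
  rw [abelPoly, derivative_sum, sum_range_succ, abelPoly, mul_sum]
  simp only [Nat.sub_self, pow_zero, mul_one, derivative_C, add_zero]
  refine sum_congr rfl fun k hk => ?_
  have hchoose : ((m + 1).choose k : R) * ((m + 1 - k : ℕ) : R) = ((m : R) + 1) * m.choose k := by
    exact_mod_cast congrArg (Nat.cast : ℕ → R)
      ((Nat.choose_mul_succ_eq m k).symm.trans (mul_comm _ _))
  simp only [derivative_C_mul, derivative_pow, derivative_sub, derivative_X, derivative_C,
    sub_zero, mul_one, ← mul_assoc, ← C_mul,
    show m + 1 - k - 1 = m - k by have := mem_range.mp hk; omega]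
  congr 2
  linear_combination ((k : R) + 1) ^ (k - 1) * hchoose

theorem eval_neg_one_abelPoly_succ (m : ℕ) : (abelPoly R (m + 1)).eval (-1) = 0 := by
  have hdeg : ((X + 1 : R[X]) ^ m).natDegree < m + 1 :=
    (natDegree_pow_le_of_le m (by compute_degree)).trans_lt (by omega : m * 1 < m + 1)
  have hdiff := congrFun (fwdDiff_iter_eq_zero_of_degree_lt hdeg) 0
  rw [fwdDiff_iter_eq_sum_shift, Pi.zero_apply] at hdiff
  rw [abelPoly, eval_finsetSum, ← hdiff]
  refine sum_congr rfl fun k hk => ?_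
  have hpow : ((k : R) + 1) ^ (k - 1) * ((k : R) + 1) ^ (m + 1 - k) = ((k : R) + 1) ^ m := by
    rcases k with _ | k
    · simp
    · rw [← pow_add]; congr 1; have := mem_range.mp hk; omega
  simp only [eval_mul, eval_C, eval_pow, eval_sub, eval_X, eval_add, eval_one, zsmul_eq_mul,
    zero_add, nsmul_eq_mul, mul_one, show (-1 - k : R) = -1 * (k + 1) by ring, mul_pow]
  push_cast
  linear_combination ((-1 : R) ^ (m + 1 - k) * (m + 1).choose k) * hpow

variable [IsAddTorsionFree R]

theorem abelPoly_eq (m : ℕ) : abelPoly R m = (X + 1) ^ m := by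
  induction m with
  | zero => simp [abelPoly]
  | succ m ih =>
    have hconst : derivative (abelPoly R (m + 1) - (X + 1) ^ (m + 1)) = 0 := by
      rw [derivative_sub, derivative_abelPoly_succ, ih, derivative_pow]
      simp
    obtain ⟨c, hc⟩ := natDegree_eq_zero.mp (derivative_eq_zero.mp hconst)
    have hc0 : c = 0 := by
      simpa [eval_neg_one_abelPoly_succ] using congrArg (eval (-1)) hc
    rw [hc0, map_zero, eq_comm, sub_eq_zero] at hc
    exact hc

end

theorem stmt_3 (n : ℕ) (hn : 1 ≤ n) :
    ((n : ℚ) + 1 / 2) ^ (n - 1) =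
      ∑ j ∈ Finset.Icc 1 n,
        ((n - 1).choose (n - j) : ℚ) * (((n - j : ℕ) : ℚ) + 1 / 2) ^ (n - j) *
          (j : ℚ) ^ (j - 2) := by
  obtain ⟨m, rfl⟩ := Nat.exists_eq_add_of_le' hn
  have habel := congrArg (eval ((m : ℚ) + 1 / 2)) (abelPoly_eq (R := ℚ) m)
  rw [abelPoly, eval_finsetSum] at habel
  rw [← Ico_add_one_right_eq_Icc, ← sum_Ico_add' (c := 1) (a := 0), ← range_eq_Ico,
    Nat.add_sub_cancel]
  convert habel.symm using 1
  · simp only [eval_pow, eval_add, eval_X, eval_one]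
    push_cast
    ring
  refine sum_congr rfl fun k hk => ?_
  have hkm : k ≤ m := Nat.lt_succ_iff.mp (mem_range.mp hk)
  rw [show m + 1 - (k + 1) = m - k by omega, show k + 1 - 2 = k - 1 by omega,
    Nat.choose_symm hkm, Nat.cast_sub hkm]
  simp only [eval_mul, eval_C, eval_pow, eval_sub, eval_X]
  push_cast
  ring
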